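/- For i = 1, 2, let C_i be a binary doubly even code of length n_i containing the all-one vector, and let f : C₁^⊥/C₁ → C₂^⊥/C₂ be an isometry. Then D(C₁, C₂, f) = {(x₁, x₂) : x₁ ∈ C₁^⊥, x₂ ∈ f(x₁ + C₁)} is a doubly even self-dual code of length n₁ + n₂. -/

import Mathlib

open Finset

/-- Hamming weight of a binary vector: number of nonzero coordinates. -/
def wt {n : ℕ} (x : Fin n → ZMod 2) : ℕ := (Finset.univ.filter fun i => x i ≠ 0).card

/-- The dual code with respect to the standard inner product. -/
def dualCode {n : ℕ} (C : Submodule (ZMod 2) (Fin n → ZMod 2)) :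
    Submodule (ZMod 2) (Fin n → ZMod 2) where
  carrier := {x | ∀ y ∈ C, ∑ i, x i * y i = 0}
  add_mem' := by
    intro a b ha hb y hy
    simp only [Set.mem_setOf_eq] at *
    simp [Pi.add_apply, add_mul, Finset.sum_add_distrib, ha y hy, hb y hy]
  zero_mem' := by intro y hy; simp
  smul_mem' := by
    intro c a ha y hy
    simp only [Set.mem_setOf_eq] at *
    simp [Pi.smul_apply, smul_eq_mul, mul_assoc, ← Finset.mul_sum, ha y hy]

/-- A code is self-dual if it equals its dual code. -/
def isSelfDual {n : ℕ} (C : Submodule (ZMod 2) (Fin n → ZMod 2)) : Prop := dualCode C = C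

/-- A code is doubly even if every codeword has weight divisible by 4. -/
def isDoublyEven {n : ℕ} (C : Submodule (ZMod 2) (Fin n → ZMod 2)) : Prop :=
  ∀ x ∈ C, 4 ∣ wt x

/-- Minimum weight of a code: the smallest weight of a nonzero codeword. -/
noncomputable def minWt {n : ℕ} (C : Submodule (ZMod 2) (Fin n → ZMod 2)) : ℕ :=
  sInf {w | ∃ x ∈ C, x ≠ 0 ∧ wt x = w}

/-- The linear map on `Fin n → ZMod 2` given by permuting coordinates. -/
def permMap {n : ℕ} (σ : Equiv.Perm (Fin n)) :
    (Fin n → ZMod 2) →ₗ[ZMod 2] (Fin n → ZMod 2) :=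
  LinearMap.funLeft (ZMod 2) (ZMod 2) σ

/-- Equivalence of codes: one is obtained from the other by permuting coordinates. -/
def codeEquiv {n : ℕ} (C C' : Submodule (ZMod 2) (Fin n → ZMod 2)) : Prop :=
  ∃ σ : Equiv.Perm (Fin n), Submodule.map (permMap σ) C = C'

/-- The quotient `C^⊥ / C` (with `C` viewed inside its dual code). -/
abbrev resQuot {n : ℕ} (C : Submodule (ZMod 2) (Fin n → ZMod 2)) :=
  ↥(dualCode C) ⧸ Submodule.comap (dualCode C).subtype C

/-- A bijective linear map `f : C₁^⊥/C₁ → C₂^⊥/C₂` is an isometry if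
`q_{C₁} = q_{C₂} ∘ f`, i.e. whenever `y ∈ C₂^⊥` represents the image under `f` of the
class of `x ∈ C₁^⊥`, we have `wt x / 2 ≡ wt y / 2 (mod 2)`. -/
def IsIsometry {n₁ n₂ : ℕ} {C₁ : Submodule (ZMod 2) (Fin n₁ → ZMod 2)}
    {C₂ : Submodule (ZMod 2) (Fin n₂ → ZMod 2)}
    (f : resQuot C₁ ≃ₗ[ZMod 2] resQuot C₂) : Prop :=
  ∀ (x : ↥(dualCode C₁)) (y : ↥(dualCode C₂)),
    f (Submodule.Quotient.mk x) = Submodule.Quotient.mk y →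
      wt x.1 / 2 ≡ wt y.1 / 2 [MOD 2]

/-- The set `D(C₁, C₂, f) = {(x₁, x₂) | x₁ ∈ C₁^⊥, x₂ ∈ f(x₁ + C₁)}`. -/
def DSet {n₁ n₂ : ℕ} (C₁ : Submodule (ZMod 2) (Fin n₁ → ZMod 2))
    (C₂ : Submodule (ZMod 2) (Fin n₂ → ZMod 2))
    (f : resQuot C₁ ≃ₗ[ZMod 2] resQuot C₂) : Set (Fin (n₁ + n₂) → ZMod 2) :=
  {z | ∃ (x : ↥(dualCode C₁)) (y : ↥(dualCode C₂)),
    f (Submodule.Quotient.mk x) = Submodule.Quotient.mk y ∧ z = Fin.append x.1 y.1}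

/-!
Concatenating the pairs `(x, y) ∈ C₁^⊥ × C₂^⊥` with `f (x + C₁) = y + C₂` gives a linear code `D`,
namely the image of the kernel of the defect map `(x, y) ↦ f (x + C₁) - (y + C₂)`.
Since `1 ∈ Cᵢ`, every word of `Cᵢ^⊥` has even weight, and the isometry condition
`wt x / 2 ≡ wt y / 2 (mod 2)` makes `wt (x, y) = wt x + wt y` divisible by 4. Doubly even codes
are self-orthogonal, because `wt (u + v) = wt u + wt v - 2 |supp u ∩ supp v|`. The defect map is
onto `C₂^⊥/C₂`, so with `kᵢ = dim Cᵢ` we get `dim D = (n₁ - k₁) + k₂`, while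
`n₁ - 2k₁ = dim C₁^⊥/C₁ = dim C₂^⊥/C₂ = n₂ - 2k₂`; hence `2 dim D = n₁ + n₂`, and a
self-orthogonal code of half the length is self-dual.
-/

open Module Matrix

section Weight

variable {n : ℕ}

lemma wt_eq_sum (x : Fin n → ZMod 2) : wt x = ∑ i, if x i ≠ 0 then 1 else 0 :=
  card_filter _ _

lemma wt_append {n₁ n₂ : ℕ} (x : Fin n₁ → ZMod 2) (y : Fin n₂ → ZMod 2) :
    wt (Fin.append x y) = wt x + wt y := by
  simp only [wt_eq_sum, Fin.sum_univ_add, Fin.append_left, Fin.append_right]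

lemma wt_add_add_two_mul_card (x y : Fin n → ZMod 2) :
    wt (x + y) + 2 * #{i | x i ≠ 0 ∧ y i ≠ 0} = wt x + wt y := by
  have key : ∀ a b : ZMod 2, ((if a + b ≠ 0 then 1 else 0) + 2 * if a ≠ 0 ∧ b ≠ 0 then 1 else 0)
      = (if a ≠ 0 then 1 else 0) + (if b ≠ 0 then 1 else 0) := by decide
  simp only [wt_eq_sum, card_filter, mul_sum, ← sum_add_distrib, Pi.add_apply, key]

lemma dotProduct_eq_card (x y : Fin n → ZMod 2) :
    x ⬝ᵥ y = (#{i | x i ≠ 0 ∧ y i ≠ 0} : ZMod 2) := by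
  have key : ∀ a b : ZMod 2, a * b = ((if a ≠ 0 ∧ b ≠ 0 then 1 else 0 : ℕ) : ZMod 2) := by decide
  simp only [dotProduct, card_filter, Nat.cast_sum, key]

end Weight

section DualCode

variable {n : ℕ} {C : Submodule (ZMod 2) (Fin n → ZMod 2)}

lemma mem_dualCode_iff {x : Fin n → ZMod 2} : x ∈ dualCode C ↔ ∀ y ∈ C, x ⬝ᵥ y = 0 :=
  Iff.rfl

lemma dualCode_eq_comap_dualAnnihilator (C : Submodule (ZMod 2) (Fin n → ZMod 2)) :
    dualCode C = C.dualAnnihilator.comap (dotProductEquiv (ZMod 2) (Fin n)).toLinearMap := by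
  ext x
  simp [mem_dualCode_iff, Submodule.mem_dualAnnihilator]

lemma finrank_dualCode_add_finrank (C : Submodule (ZMod 2) (Fin n → ZMod 2)) :
    finrank (ZMod 2) (dualCode C) + finrank (ZMod 2) C = n := by
  rw [dualCode_eq_comap_dualAnnihilator, Submodule.comap_equiv_eq_map_symm,
    LinearEquiv.finrank_map_eq, add_comm, Subspace.finrank_add_finrank_dualAnnihilator_eq,
    finrank_fin_fun]

lemma le_dualCode_of_isDoublyEven (h : isDoublyEven C) : C ≤ dualCode C := by
  intro x hx
  rw [mem_dualCode_iff]
  intro y hy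
  rw [dotProduct_eq_card, ZMod.natCast_eq_zero_iff]
  have := wt_add_add_two_mul_card x y
  have := h x hx
  have := h y hy
  have := h _ (C.add_mem hx hy)
  omega

lemma two_dvd_wt_of_mem_dualCode (hone : (fun _ => 1 : Fin n → ZMod 2) ∈ C)
    {x : Fin n → ZMod 2} (hx : x ∈ dualCode C) : 2 ∣ wt x := by
  have := mem_dualCode_iff.1 hx _ hone
  rw [dotProduct_eq_card, ZMod.natCast_eq_zero_iff] at this
  simpa [wt] using this

lemma finrank_resQuot_add_finrank (h : C ≤ dualCode C) :
    finrank (ZMod 2) (resQuot C) + finrank (ZMod 2) C = finrank (ZMod 2) (dualCode C) := by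
  rw [← (Submodule.comapSubtypeEquivOfLe h).finrank_eq]
  exact Submodule.finrank_quotient_add_finrank _

lemma isSelfDual_of_le_dualCode (hle : C ≤ dualCode C) (hdim : 2 * finrank (ZMod 2) C = n) :
    isSelfDual C := by
  refine (Submodule.eq_of_le_of_finrank_le hle ?_).symm
  have := finrank_dualCode_add_finrank C
  omega

end DualCode

def Fin.appendLinearEquiv (R : Type*) [Semiring R] (n₁ n₂ : ℕ) :
    ((Fin n₁ → R) × (Fin n₂ → R)) ≃ₗ[R] (Fin (n₁ + n₂) → R) where
  __ := Fin.appendEquiv n₁ n₂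
  map_add' _ _ := by ext i; cases i using Fin.addCases <;> simp
  map_smul' _ _ := by ext i; cases i using Fin.addCases <;> simp

section Gluing

variable {n₁ n₂ : ℕ} {C₁ : Submodule (ZMod 2) (Fin n₁ → ZMod 2)}
  {C₂ : Submodule (ZMod 2) (Fin n₂ → ZMod 2)} (f : resQuot C₁ ≃ₗ[ZMod 2] resQuot C₂)

def gluingDefect : (dualCode C₁ × dualCode C₂) →ₗ[ZMod 2] resQuot C₂ :=
  f.toLinearMap ∘ₗ Submodule.mkQ _ ∘ₗ LinearMap.fst _ _ _ - Submodule.mkQ _ ∘ₗ LinearMap.snd _ _ _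

lemma mem_ker_gluingDefect {p : dualCode C₁ × dualCode C₂} :
    p ∈ LinearMap.ker (gluingDefect f) ↔
      f (Submodule.Quotient.mk p.1) = Submodule.Quotient.mk p.2 := by
  simp [gluingDefect, sub_eq_zero]

lemma gluingDefect_surjective : Function.Surjective (gluingDefect f) := by
  intro q
  obtain ⟨y, rfl⟩ := Submodule.Quotient.mk_surjective _ q
  exact ⟨(0, -y), by simp [gluingDefect]⟩

def DCode : Submodule (ZMod 2) (Fin (n₁ + n₂) → ZMod 2) :=
  (LinearMap.ker (gluingDefect f)).map ((Fin.appendLinearEquiv (ZMod 2) n₁ n₂).toLinearMap ∘ₗ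
    (dualCode C₁).subtype.prodMap (dualCode C₂).subtype)

lemma coe_DCode : (DCode f : Set (Fin (n₁ + n₂) → ZMod 2)) = DSet C₁ C₂ f := by
  ext z
  constructor
  · rintro ⟨⟨x, y⟩, hxy, rfl⟩
    exact ⟨x, y, (mem_ker_gluingDefect f).1 hxy, rfl⟩
  · rintro ⟨x, y, hxy, rfl⟩
    exact ⟨(x, y), (mem_ker_gluingDefect f).2 hxy, rfl⟩

lemma finrank_DCode :
    finrank (ZMod 2) (DCode f) = finrank (ZMod 2) (LinearMap.ker (gluingDefect f)) := by
  refine (Submodule.equivMapOfInjective _ ?_ _).finrank_eq.symm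
  exact (Fin.appendLinearEquiv _ _ _).injective.comp
    (Subtype.val_injective.prodMap Subtype.val_injective)

lemma isDoublyEven_DCode (hone₁ : (fun _ => 1 : Fin n₁ → ZMod 2) ∈ C₁)
    (hone₂ : (fun _ => 1 : Fin n₂ → ZMod 2) ∈ C₂) (hf : IsIsometry f) :
    isDoublyEven (DCode f) := by
  rintro _ ⟨⟨x, y⟩, hxy, rfl⟩
  have hq := hf x y ((mem_ker_gluingDefect f).1 hxy)
  have hx := two_dvd_wt_of_mem_dualCode hone₁ x.2
  have hy := two_dvd_wt_of_mem_dualCode hone₂ y.2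
  change 4 ∣ wt (Fin.append x.1 y.1)
  rw [wt_append]
  unfold Nat.ModEq at hq
  omega

lemma two_mul_finrank_DCode (h₁ : C₁ ≤ dualCode C₁) (h₂ : C₂ ≤ dualCode C₂) :
    2 * finrank (ZMod 2) (DCode f) = n₁ + n₂ := by
  have hker := LinearMap.finrank_range_add_finrank_ker (gluingDefect f)
  rw [LinearMap.range_eq_top.2 (gluingDefect_surjective f), finrank_top, finrank_prod] at hker
  have := f.finrank_eq
  have := finrank_resQuot_add_finrank h₁
  have := finrank_resQuot_add_finrank h₂
  have := finrank_dualCode_add_finrank C₁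
  have := finrank_dualCode_add_finrank C₂
  rw [finrank_DCode]
  omega

end Gluing

/-- For doubly even codes `C₁, C₂` of lengths `n₁, n₂` containing the all-one vector, and
an isometry `f : C₁^⊥/C₁ → C₂^⊥/C₂`, the set `D(C₁, C₂, f)` is a doubly even self-dual
code of length `n₁ + n₂`. -/
theorem DSet_doubly_even_self_dual {n₁ n₂ : ℕ}
    (C₁ : Submodule (ZMod 2) (Fin n₁ → ZMod 2))
    (C₂ : Submodule (ZMod 2) (Fin n₂ → ZMod 2))
    (hDE₁ : isDoublyEven C₁) (hDE₂ : isDoublyEven C₂)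
    (hone₁ : (fun _ => 1 : Fin n₁ → ZMod 2) ∈ C₁)
    (hone₂ : (fun _ => 1 : Fin n₂ → ZMod 2) ∈ C₂)
    (f : resQuot C₁ ≃ₗ[ZMod 2] resQuot C₂) (hf : IsIsometry f) :
    ∃ D : Submodule (ZMod 2) (Fin (n₁ + n₂) → ZMod 2),
      (↑D : Set (Fin (n₁ + n₂) → ZMod 2)) = DSet C₁ C₂ f ∧
      isSelfDual D ∧ isDoublyEven D := by
  have hD : isDoublyEven (DCode f) := isDoublyEven_DCode f hone₁ hone₂ hf
  refine ⟨DCode f, coe_DCode f, isSelfDual_of_le_dualCode (le_dualCode_of_isDoublyEven hD) ?_, hD⟩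
  exact two_mul_finrank_DCode f (le_dualCode_of_isDoublyEven hDE₁)
    (le_dualCode_of_isDoublyEven hDE₂)
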